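/- The single layer potential of the equilibrium distribution of the unit disk in ℝ³ is constant on the disk: for every point x in the open unit disk 𝔻₁ ⊂ ℝ² × {0} ⊂ ℝ³, ∫_{𝔻₁} (1/(4π|x−z|)) · (4/(π√(1−|z|²))) dz = 1. -/

import Mathlib

/-!
Identify the plane with `ℂ` and use polar coordinates `w = c + r e^{iθ}` centred at the point `c`:
the Jacobian `r` cancels the singularity `1/|c - w|` of the kernel. With `b = ⟪c, e^{iθ}⟫` and
`R² = b² + 1 - |c|²` one has `1 - |w|² = R² - (r + b)²`, so the radial integral over the chord
`0 < r < R - b` is `(π/2 - arcsin (b/R))/π²`. Replacing `θ` by `θ + π` flips the sign of `b` and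
keeps `R`, so the arcsin term integrates to zero over a period and the total is
`(π/2) · 2π / π² = 1`.
-/

open MeasureTheory Metric Real
open scoped Topology

noncomputable def planeEmb (z : EuclideanSpace ℝ (Fin 2)) : EuclideanSpace ℝ (Fin 3) :=
  WithLp.toLp 2 ![z 0, z 1, 0]

open Set intervalIntegral

theorem hasDerivAt_arcsin_div {R s : ℝ} (hR : 0 < R) (hs : s ∈ Ioo (-R) R) :
    HasDerivAt (fun s ↦ arcsin (s / R)) (√(R ^ 2 - s ^ 2))⁻¹ s := by
  obtain ⟨h₁, h₂⟩ := hs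
  have hne₁ : s / R ≠ -1 := by rw [Ne, div_eq_iff hR.ne']; linarith
  have hne₂ : s / R ≠ 1 := by rw [Ne, div_eq_iff hR.ne']; linarith
  refine ((hasDerivAt_arcsin hne₁ hne₂).comp s ((hasDerivAt_id s).div_const R)).congr_deriv ?_
  rw [show 1 - (s / R) ^ 2 = (R ^ 2 - s ^ 2) / R ^ 2 by field_simp,
    sqrt_div' _ (sq_nonneg R), sqrt_sq hR.le]
  have : 0 < √(R ^ 2 - s ^ 2) := sqrt_pos.2 (by nlinarith)
  field_simp

theorem intervalIntegrable_inv_sqrt_sq_sub_sq {R a b : ℝ} (hR : 0 < R) (ha : -R ≤ a)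
    (hab : a ≤ b) (hb : b ≤ R) :
    IntervalIntegrable (fun s ↦ (√(R ^ 2 - s ^ 2))⁻¹) volume a b :=
  (intervalIntegrable_iff_integrableOn_Ioc_of_le hab).2 <|
    integrableOn_deriv_of_nonneg (by fun_prop)
      (fun s hs ↦ hasDerivAt_arcsin_div hR ⟨by linarith [hs.1], by linarith [hs.2]⟩)
      (fun _ _ ↦ by positivity)

theorem integral_inv_sqrt_sq_sub_sq {R a b : ℝ} (hR : 0 < R) (ha : -R ≤ a) (hab : a ≤ b)
    (hb : b ≤ R) :
    ∫ s in a..b, (√(R ^ 2 - s ^ 2))⁻¹ = arcsin (b / R) - arcsin (a / R) :=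
  integral_eq_sub_of_hasDerivAt_of_le hab (by fun_prop)
    (fun s hs ↦ hasDerivAt_arcsin_div hR ⟨by linarith [hs.1], by linarith [hs.2]⟩)
    (intervalIntegrable_inv_sqrt_sq_sub_sq hR ha hab hb)

theorem Function.Antiperiodic.intervalIntegral_add_two_mul_eq_zero {G : ℝ → ℝ} {T : ℝ}
    (hG : Function.Antiperiodic G T) (a : ℝ) : ∫ θ in a..a + 2 * T, G θ = 0 := by
  by_cases hint : IntervalIntegrable G volume a (a + 2 * T)
  · have hmid : a + T ∈ uIcc a (a + 2 * T) := by
      rw [mem_uIcc]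
      rcases le_total 0 T with hT | hT
      · left; constructor <;> linarith
      · right; constructor <;> linarith
    have hsecond : ∫ θ in a + T..a + 2 * T, G θ = -∫ θ in a..a + T, G θ := by
      rw [← intervalIntegral.integral_neg, show (fun θ ↦ -G θ) = fun θ ↦ G (θ + T) from
        funext fun θ ↦ (hG θ).symm, integral_comp_add_right]
      ring_nf
    rw [← integral_add_adjacent_intervals (hint.mono_set (uIcc_subset_uIcc_left hmid))
      (hint.mono_set (uIcc_subset_uIcc_right hmid)), hsecond, add_neg_cancel]
  · exact integral_undef hint

section Chord

variable (c : ℂ) (θ : ℝ)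

noncomputable def rayProj : ℝ := c.re * cos θ + c.im * sin θ

/-- The ray `r ↦ c + r e^{iθ}` leaves the unit disk at `r = halfChord c θ - rayProj c θ`. -/
noncomputable def halfChord : ℝ := √(rayProj c θ ^ 2 + (1 - ‖c‖ ^ 2))

theorem rayProj_add_pi : rayProj c (θ + π) = -rayProj c θ := by
  simp only [rayProj, cos_add_pi, sin_add_pi]; ring

theorem halfChord_add_pi : halfChord c (θ + π) = halfChord c θ := by
  simp only [halfChord, rayProj_add_pi, neg_sq]

theorem continuous_rayProj : Continuous (rayProj c) := by
  unfold rayProj; fun_prop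

theorem continuous_halfChord : Continuous (halfChord c) := by
  unfold halfChord; have := continuous_rayProj c; fun_prop

variable {c}

theorem halfChord_sq (hc : ‖c‖ ≤ 1) :
    halfChord c θ ^ 2 = rayProj c θ ^ 2 + (1 - ‖c‖ ^ 2) :=
  sq_sqrt (by nlinarith [sq_nonneg (rayProj c θ), norm_nonneg c])

theorem abs_rayProj_lt_halfChord (hc : ‖c‖ < 1) : |rayProj c θ| < halfChord c θ := by
  rw [halfChord, ← sqrt_sq_eq_abs]
  exact sqrt_lt_sqrt (sq_nonneg _) (by nlinarith [norm_nonneg c])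

theorem one_sub_norm_add_polarCoord_symm_sq (hc : ‖c‖ ≤ 1) (r : ℝ) :
    1 - ‖c + Complex.polarCoord.symm (r, θ)‖ ^ 2 =
      halfChord c θ ^ 2 - (r + rayProj c θ) ^ 2 := by
  rw [halfChord_sq θ hc, Complex.sq_norm, Complex.sq_norm, Complex.normSq_apply,
    Complex.normSq_apply, rayProj]
  simp only [Complex.polarCoord_symm_apply, Complex.add_re, Complex.add_im, Complex.mul_re,
    Complex.mul_im, Complex.ofReal_re, Complex.ofReal_im, Complex.I_re, Complex.I_im]
  linear_combination (-r ^ 2) * sin_sq_add_cos_sq θ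

theorem add_polarCoord_symm_mem_ball_iff (hc : ‖c‖ < 1) {r : ℝ} (hr : 0 < r) :
    c + Complex.polarCoord.symm (r, θ) ∈ ball (0 : ℂ) 1 ↔ r < halfChord c θ - rayProj c θ := by
  have hb := abs_lt.1 (abs_rayProj_lt_halfChord θ hc)
  have hR : 0 < halfChord c θ := by linarith [hb.1, hb.2]
  rw [mem_ball_zero_iff, ← sq_lt_one_iff₀ (norm_nonneg _), ← sub_pos,
    one_sub_norm_add_polarCoord_symm_sq θ hc.le, sub_pos, sq_lt_sq, abs_of_pos hR, abs_lt]
  constructor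
  · intro h; linarith [h.2]
  · intro h; constructor <;> linarith

end Chord

noncomputable def singleLayerIntegrand {E : Type*} [SeminormedAddCommGroup E] (x z : E) : ℝ :=
  1 / (4 * π * ‖x - z‖) * (4 / (π * √(1 - ‖z‖ ^ 2)))

/-- `singleLayerIntegrand c` in the polar coordinates `c + r e^{iθ}`, times the Jacobian `r`. -/
noncomputable def polarDensity (c : ℂ) (p : ℝ × ℝ) : ℝ :=
  (Ioo 0 (halfChord c p.2 - rayProj c p.2)).indicator
    (fun r ↦ (π ^ 2)⁻¹ * (√(halfChord c p.2 ^ 2 - (r + rayProj c p.2) ^ 2))⁻¹) p.1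

section Polar

variable {c : ℂ}

theorem smul_indicator_add_polarCoord_symm (hc : ‖c‖ < 1) {p : ℝ × ℝ} (hp : 0 < p.1) :
    p.1 • (ball 0 1).indicator (singleLayerIntegrand c) (c + Complex.polarCoord.symm p) =
      polarDensity c p := by
  obtain ⟨r, θ⟩ := p
  have hmem := add_polarCoord_symm_mem_ball_iff θ hc hp
  by_cases hr : r < halfChord c θ - rayProj c θ
  · have hball := hmem.2 hr
    have hsqrt : 0 < √(halfChord c θ ^ 2 - (r + rayProj c θ) ^ 2) := by
      rw [sqrt_pos, ← one_sub_norm_add_polarCoord_symm_sq θ hc.le, sub_pos,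
        sq_lt_one_iff₀ (norm_nonneg _)]
      exact mem_ball_zero_iff.1 hball
    rw [indicator_of_mem hball, polarDensity, indicator_of_mem (show r ∈ Ioo _ _ from ⟨hp, hr⟩),
      singleLayerIntegrand, sub_add_cancel_left, norm_neg, Complex.norm_polarCoord_symm,
      abs_of_pos hp, one_sub_norm_add_polarCoord_symm_sq θ hc.le, smul_eq_mul]
    field_simp
  · rw [indicator_of_notMem (mt hmem.1 hr), polarDensity,
      indicator_of_notMem (fun h ↦ hr h.2), smul_zero]

theorem polarDensity_nonneg (p : ℝ × ℝ) : 0 ≤ polarDensity c p :=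
  indicator_nonneg (fun _ _ ↦ by positivity) _

theorem measurable_polarDensity : Measurable (polarDensity c) := by
  have hb := continuous_rayProj c
  have hR := continuous_halfChord c
  let U : Set (ℝ × ℝ) := {p | 0 < p.1} ∩ {p | p.1 < halfChord c p.2 - rayProj c p.2}
  have hU : IsOpen U :=
    (isOpen_lt (by fun_prop) (by fun_prop)).inter (isOpen_lt (by fun_prop) (by fun_prop))
  have heq : polarDensity c = U.indicator
      fun p ↦ (π ^ 2)⁻¹ * (√(halfChord c p.2 ^ 2 - (p.1 + rayProj c p.2) ^ 2))⁻¹ := by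
    ext p; rfl
  rw [heq]
  exact (Measurable.const_mul (Continuous.measurable (by fun_prop)).inv _).indicator
    hU.measurableSet

theorem intervalIntegrable_polarDensity_slice (hc : ‖c‖ < 1) (θ : ℝ) :
    IntervalIntegrable (fun r ↦ (√(halfChord c θ ^ 2 - (r + rayProj c θ) ^ 2))⁻¹) volume
      0 (halfChord c θ - rayProj c θ) := by
  have hb := abs_lt.1 (abs_rayProj_lt_halfChord θ hc)
  simpa using (intervalIntegrable_inv_sqrt_sq_sub_sq (by linarith) hb.1.le hb.2.le
    le_rfl).comp_add_right (rayProj c θ)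

theorem integrableOn_polarDensity_slice (hc : ‖c‖ < 1) (θ : ℝ) :
    IntegrableOn (fun r ↦ polarDensity c (r, θ)) (Ioi 0) := by
  have hslice := ((intervalIntegrable_polarDensity_slice hc θ).const_mul (π ^ 2)⁻¹).1
  exact (hslice.mono_set Ioo_subset_Ioc_self).integrable_indicator measurableSet_Ioo
    |>.integrableOn

theorem integral_polarDensity_slice (hc : ‖c‖ < 1) (θ : ℝ) :
    ∫ r in Ioi 0, polarDensity c (r, θ) =
      (π ^ 2)⁻¹ * (π / 2 - arcsin (rayProj c θ / halfChord c θ)) := by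
  have hb := abs_lt.1 (abs_rayProj_lt_halfChord θ hc)
  have hR : 0 < halfChord c θ := by linarith [hb.1, hb.2]
  calc ∫ r in Ioi 0, polarDensity c (r, θ)
      = ∫ r in 0..halfChord c θ - rayProj c θ,
          (π ^ 2)⁻¹ * (√(halfChord c θ ^ 2 - (r + rayProj c θ) ^ 2))⁻¹ := by
        simp only [polarDensity]
        rw [setIntegral_indicator measurableSet_Ioo, inter_eq_right.2 Ioo_subset_Ioi_self,
          integral_of_le (by linarith), integral_Ioc_eq_integral_Ioo]
    _ = (π ^ 2)⁻¹ * ∫ s in rayProj c θ..halfChord c θ, (√(halfChord c θ ^ 2 - s ^ 2))⁻¹ := by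
        rw [intervalIntegral.integral_const_mul,
          integral_comp_add_right (fun s ↦ (√(halfChord c θ ^ 2 - s ^ 2))⁻¹), zero_add,
          sub_add_cancel]
    _ = (π ^ 2)⁻¹ * (π / 2 - arcsin (rayProj c θ / halfChord c θ)) := by
        rw [integral_inv_sqrt_sq_sub_sq hR hb.1.le hb.2.le le_rfl, div_self hR.ne', arcsin_one]

theorem continuous_arcsin_rayProj_div_halfChord (hc : ‖c‖ < 1) :
    Continuous fun θ ↦ arcsin (rayProj c θ / halfChord c θ) :=
  continuous_arcsin.comp <| (continuous_rayProj c).div (continuous_halfChord c) fun θ ↦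
    ((abs_nonneg _).trans_lt (abs_rayProj_lt_halfChord θ hc)).ne'

theorem antiperiodic_arcsin_rayProj_div_halfChord :
    Function.Antiperiodic (fun θ ↦ arcsin (rayProj c θ / halfChord c θ)) π := fun θ ↦ by
  simp only [rayProj_add_pi, halfChord_add_pi, neg_div, arcsin_neg]

theorem integrable_polarDensity (hc : ‖c‖ < 1) :
    Integrable (polarDensity c)
      ((volume.restrict (Ioi 0)).prod (volume.restrict (Ioo (-π) π))) := by
  refine (integrable_prod_iff' measurable_polarDensity.aestronglyMeasurable).2
    ⟨.of_forall (integrableOn_polarDensity_slice hc), ?_⟩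
  simp only [Real.norm_of_nonneg (polarDensity_nonneg _), integral_polarDensity_slice hc]
  have := continuous_arcsin_rayProj_div_halfChord hc
  exact (Continuous.integrableOn_Icc (by fun_prop)).mono_set Ioo_subset_Icc_self

theorem integral_polarDensity (hc : ‖c‖ < 1) :
    ∫ p in polarCoord.target, polarDensity c p = 1 := by
  have hπ : -π ≤ π := by linarith [pi_pos]
  have hint :=
    (continuous_arcsin_rayProj_div_halfChord hc).intervalIntegrable (μ := volume) (-π) π
  have hzero :=
    (antiperiodic_arcsin_rayProj_div_halfChord (c := c)).intervalIntegral_add_two_mul_eq_zero (-π)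
  rw [show -π + 2 * π = π by ring] at hzero
  rw [polarCoord_target, Measure.volume_eq_prod, ← Measure.prod_restrict,
    integral_prod_symm _ (integrable_polarDensity hc),
    setIntegral_congr_fun measurableSet_Ioo fun θ _ ↦ integral_polarDensity_slice hc θ,
    ← integral_Ioc_eq_integral_Ioo, ← integral_of_le hπ, intervalIntegral.integral_const_mul,
    intervalIntegral.integral_sub intervalIntegrable_const hint, hzero,
    intervalIntegral.integral_const, smul_eq_mul]
  field_simp
  ring

end Polar

theorem integral_ball_singleLayerIntegrand {c : ℂ} (hc : ‖c‖ < 1) :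
    ∫ w in ball (0 : ℂ) 1, singleLayerIntegrand c w = 1 := by
  rw [← MeasureTheory.integral_indicator measurableSet_ball, ← integral_add_left_eq_self _ c,
    ← Complex.integral_comp_polarCoord_symm]
  refine (setIntegral_congr_fun polarCoord.open_target.measurableSet fun p hp ↦ ?_).trans
    (integral_polarDensity hc)
  rw [polarCoord_target] at hp
  exact smul_indicator_add_polarCoord_symm hc hp.1

theorem singleLayerIntegrand_map {E F : Type*} [SeminormedAddCommGroup E] [Module ℝ E]
    [SeminormedAddCommGroup F] [Module ℝ F] (e : E →ₗᵢ[ℝ] F) (x z : E) :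
    singleLayerIntegrand (e x) (e z) = singleLayerIntegrand x z := by
  simp only [singleLayerIntegrand, ← map_sub, e.norm_map]

theorem LinearIsometryEquiv.setIntegral_ball_comp {E F G : Type*} [NormedAddCommGroup E]
    [InnerProductSpace ℝ E] [FiniteDimensional ℝ E] [MeasurableSpace E] [BorelSpace E]
    [NormedAddCommGroup F] [InnerProductSpace ℝ F] [FiniteDimensional ℝ F] [MeasurableSpace F]
    [BorelSpace F] [NormedAddCommGroup G] [NormedSpace ℝ G] (e : E ≃ₗᵢ[ℝ] F) (f : F → G)
    (x : F) (r : ℝ) : ∫ w in ball (e.symm x) r, f (e w) = ∫ z in ball x r, f z := by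
  rw [← e.preimage_ball]
  exact e.measurePreserving.setIntegral_preimage_emb e.toHomeomorph.measurableEmbedding f _

theorem norm_planeEmb_sub (x z : EuclideanSpace ℝ (Fin 2)) :
    ‖planeEmb x - planeEmb z‖ = ‖x - z‖ := by
  simp [EuclideanSpace.norm_eq, Fin.sum_univ_three, Fin.sum_univ_two, planeEmb]

/-- The single layer potential (in `ℝ³`) of the equilibrium distribution
`φ(z) = 4/(π√(1-|z|²))` of the unit disk is identically `1` on the disk:
for every `x ∈ 𝔻₁`, `∫_{𝔻₁} Γ(x,z) φ(z) dz = 1`, with `Γ(x,z) = 1/(4π|x-z|)`. -/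
theorem singleLayer_equilibrium_eq_one (x : EuclideanSpace ℝ (Fin 2)) (hx : ‖x‖ < 1) :
    ∫ z in ball (0 : EuclideanSpace ℝ (Fin 2)) 1,
      (1 / (4 * π * ‖planeEmb x - planeEmb z‖)) * (4 / (π * Real.sqrt (1 - ‖z‖ ^ 2))) = 1 := by
  let e : ℂ ≃ₗᵢ[ℝ] EuclideanSpace ℝ (Fin 2) := Complex.orthonormalBasisOneI.repr
  calc ∫ z in ball 0 1, 1 / (4 * π * ‖planeEmb x - planeEmb z‖) * (4 / (π * √(1 - ‖z‖ ^ 2)))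
      = ∫ z in ball 0 1, singleLayerIntegrand x z := by simp only [norm_planeEmb_sub]; rfl
    _ = ∫ w in ball 0 1, singleLayerIntegrand x (e w) := by
        rw [← e.setIntegral_ball_comp, map_zero]
    _ = ∫ w in ball 0 1, singleLayerIntegrand (e.symm x) w := by
        simp only [← singleLayerIntegrand_map e.toLinearIsometry (e.symm x),
          LinearIsometryEquiv.coe_toLinearIsometry, e.apply_symm_apply]
    _ = 1 := integral_ball_singleLayerIntegrand (by rwa [e.symm.norm_map])
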